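/- The rewriting system (C, T) is noetherian: there is no infinite sequence w_1 → w_2 → w_3 → ⋯ of words in C* in which each w_{i+1} is obtained from w_i by a single application of a rule of T. -/

import Mathlib

/-! Common definitions: Plactic monoid, columns, rows, tableaux, the
rewriting system `(C,T)`. -/

/-- Words over the ordered alphabet `A = {1 < 2 < ⋯ < n}`, modelled as `Fin n`. -/
abbrev Word (n : ℕ) := List (Fin n)

/-- A single application, in context, of one of the Knuth defining relations
`(xzy, zxy)` for `x ≤ y < z` and `(yxz, yzx)` for `x < y ≤ z`. -/
inductive KnuthStep (n : ℕ) : Word n → Word n → Prop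
  | left (u v : Word n) (x y z : Fin n) (h1 : x ≤ y) (h2 : y < z) :
      KnuthStep n (u ++ [x, z, y] ++ v) (u ++ [z, x, y] ++ v)
  | right (u v : Word n) (x y z : Fin n) (h1 : x < y) (h2 : y ≤ z) :
      KnuthStep n (u ++ [y, x, z] ++ v) (u ++ [y, z, x] ++ v)

/-- `u =_{M_n} v`: the words `u`, `v` represent the same element of the Plactic
monoid `M_n`, i.e. they are equivalent under the congruence generated by the
Knuth relations. -/
def PlacticEq (n : ℕ) : Word n → Word n → Prop := Relation.EqvGen (KnuthStep n)

/-- A column: a nonempty strictly decreasing word. -/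
def IsColumn {n : ℕ} (w : Word n) : Prop := w ≠ [] ∧ w.Chain' (fun a b => b < a)

/-- A row: a nondecreasing word. -/
def IsRow {n : ℕ} (w : Word n) : Prop := w.Chain' (fun a b => a ≤ b)

/-- The row `α` dominates the row `β`: `|α| ≤ |β|` and `α_i > β_i` for all
`i ≤ |α|`. -/
def Dominates {n : ℕ} (α β : Word n) : Prop :=
  α.length ≤ β.length ∧
    ∀ i (hα : i < α.length) (hβ : i < β.length), β[i]'hβ < α[i]'hα

/-- `rs` is the list of rows, from top to bottom, of (the planar representation
of) a tableau: each row is a nonempty row, and each row dominates the next. -/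
def IsTableauRows {n : ℕ} (rs : List (Word n)) : Prop :=
  (∀ r ∈ rs, r ≠ [] ∧ IsRow r) ∧ rs.Chain' Dominates

/-- `w` is a tableau: it is the product, from top to bottom, of the rows of a
planar tableau (this decomposition is automatically the decomposition of `w`
into rows of maximal length). -/
def IsTableau {n : ℕ} (w : Word n) : Prop :=
  ∃ rs : List (Word n), IsTableauRows rs ∧ w = rs.flatten

/-- The order `⪰` on columns: for `α = α_k⋯α_1` and `β = β_l⋯β_1` (so that the
letters of a column are indexed from the bottom, i.e. from the right-hand end
of the word), `α ⪰ β` iff `k ≥ l` and `α_i ≤ β_i` for all `i ≤ l`; that is,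
`α` may appear immediately to the left of `β` in a tableau. -/
def ColGE {n : ℕ} (α β : Word n) : Prop :=
  β.length ≤ α.length ∧
    ∀ (i : ℕ) (a b : Fin n), α.reverse[i]? = some a → β.reverse[i]? = some b → a ≤ b

/-- The finite alphabet `C = {c_α : α a column}`. -/
abbrev CLetter (n : ℕ) := {w : Word n // IsColumn w}

/-- Words over the alphabet `C`. -/
abbrev CWord (n : ℕ) := List (CLetter n)

/-- The image of a word over `C` under `c_α ↦ α`. -/
def evalC {n : ℕ} (u : CWord n) : Word n := (u.map Subtype.val).flatten

/-- `SingleColP u w`: the tableau `P(u)` consists of a single column, namely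
`w`.  (Since tableaux form a cross-section of `M_n`, and a word which is a
single column is itself a tableau, this holds precisely when `w` is a column
representing the same element of `M_n` as `u`.) -/
def SingleColP (n : ℕ) (u w : Word n) : Prop := IsColumn w ∧ PlacticEq n u w

/-- `TwoColP u w₁ w₂`: the tableau `P(u)` consists of exactly two columns, with
left column `w₁` and right column `w₂`.  (Since tableaux form a cross-section
of `M_n`, and the words `w₁ w₂` with `w₁ ⪰ w₂` columns are exactly the column
readings of two-column tableaux, this holds precisely when `w₁, w₂` are columns
with `w₁ ⪰ w₂` whose concatenation represents the same element of `M_n` as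
`u`.) -/
def TwoColP (n : ℕ) (u w₁ w₂ : Word n) : Prop :=
  IsColumn w₁ ∧ IsColumn w₂ ∧ ColGE w₁ w₂ ∧ PlacticEq n u (w₁ ++ w₂)

/-- The rules of the rewriting system `T` on `C*`: for columns `α ⋡ β`,
`c_α c_β → c_γ` if `P(αβ)` is the single column `γ`, and `c_α c_β → c_γ c_δ`
if `P(αβ)` has exactly two columns `γ` (left) and `δ` (right). -/
inductive TRule (n : ℕ) : CWord n → CWord n → Prop
  | one (α β γ : CLetter n) (h : ¬ ColGE α.1 β.1)
      (hP : SingleColP n (α.1 ++ β.1) γ.1) :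
      TRule n [α, β] [γ]
  | two (α β γ δ : CLetter n) (h : ¬ ColGE α.1 β.1)
      (hP : TwoColP n (α.1 ++ β.1) γ.1 δ.1) :
      TRule n [α, β] [γ, δ]

/-- One step of rewriting using a rule of `T`, in context. -/
def TStep (n : ℕ) (u v : CWord n) : Prop :=
  ∃ p q l r, TRule n l r ∧ u = p ++ l ++ q ∧ v = p ++ r ++ q

/-! Which lengths the strictly decreasing subsequences of a word can have is invariant under
the Knuth relations (Schensted), as one checks on the three letters of each relation. For a
two-column reading `γδ` with `γ ⪰ δ` no such subsequence is longer than `γ`, whereas for columns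
`α ⋡ β` the word `αβ` has one of length `|α| + 1`. Hence a rule `c_α c_β → c_γ c_δ` makes the left
column longer at the expense of the right one, and a rule `c_α c_β → c_γ` shortens the word. Since
rules preserve the total number of letters, the weight `∑ |c_i| 2^(i-1)` of `c_1 ⋯ c_k` strictly
decreases under every rewriting step. -/

theorem List.exists_eq_append_cons_of_getElem?_eq_some {α : Type*} {l : List α} {i : ℕ} {a : α}
    (h : l[i]? = some a) : ∃ l₁ l₂, l = l₁ ++ a :: l₂ ∧ l₁.length = i := by
  obtain ⟨hi, rfl⟩ := List.getElem?_eq_some_iff.1 h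
  exact ⟨l.take i, l.drop (i + 1), by rw [← List.drop_eq_getElem_cons hi, List.take_append_drop],
    by simp [hi.le]⟩

theorem List.countP_le_countP_of_forall_getElem? {α : Type*} (p : α → Bool) :
    ∀ {l₁ l₂ : List α}, l₂.length ≤ l₁.length →
      (∀ (i : ℕ) (a b : α), l₁[i]? = some a → l₂[i]? = some b → p b → p a) →
        l₂.countP p ≤ l₁.countP p
  | _, [], _, _ => by simp
  | [], _ :: _, hlen, _ => by simp at hlen
  | a :: l₁, b :: l₂, hlen, h => by
    have ih : l₂.countP p ≤ l₁.countP p :=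
      countP_le_countP_of_forall_getElem? p (by simpa using hlen)
        fun i x y hx hy => h (i + 1) x y hx hy
    have hab := h 0 a b rfl rfl
    simp only [List.countP_cons]
    split_ifs <;> simp_all
    omega

section DecreasingSublist

variable {α : Type*} [Preorder α]

def HasDecreasingSublist (w : List α) (k : ℕ) : Prop :=
  ∃ s : List α, s.Sublist w ∧ s.Pairwise (· > ·) ∧ s.length = k

/-- The bounds on the letters of `t'` let it take the place of `t` inside any longer strictly
decreasing subsequence. -/
def ReplacesDecreasingSublists (m m' : List α) : Prop :=
  ∀ t : List α, t.Sublist m → t.Pairwise (· > ·) → ∃ t' : List α, t'.Sublist m' ∧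
    t'.Pairwise (· > ·) ∧ t'.length = t.length ∧ ∀ a ∈ t', ∃ b ∈ t, ∃ c ∈ t, c ≤ a ∧ a ≤ b

theorem HasDecreasingSublist.of_replaces_infix {u m m' v : List α} {k : ℕ}
    (H : ReplacesDecreasingSublists m m') (h : HasDecreasingSublist (u ++ m ++ v) k) :
    HasDecreasingSublist (u ++ m' ++ v) k := by
  obtain ⟨s, hs, hdec, rfl⟩ := h
  obtain ⟨s₁₂, s₃, rfl, h₁₂, h₃⟩ := List.sublist_append_iff.1 hs
  obtain ⟨s₁, s₂, rfl, h₁, h₂⟩ := List.sublist_append_iff.1 h₁₂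
  simp only [List.pairwise_append, List.mem_append] at hdec
  obtain ⟨⟨hdec₁, hdec₂, h₁₂⟩, hdec₃, h₁₂₃⟩ := hdec
  obtain ⟨t, ht, hdect, hlen, hbound⟩ := H s₂ h₂ hdec₂
  refine ⟨s₁ ++ t ++ s₃, (h₁.append ht).append h₃, ?_, by simp [hlen]⟩
  simp only [List.pairwise_append, List.mem_append]
  refine ⟨⟨hdec₁, hdect, fun a ha x hx => ?_⟩, hdec₃, ?_⟩
  · obtain ⟨b, hb, -, -, -, hxb⟩ := hbound x hx
    exact hxb.trans_lt (h₁₂ a ha b hb)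
  · rintro x (hx | hx) y hy
    · exact h₁₂₃ x (.inl hx) y hy
    · obtain ⟨-, -, c, hc, hcx, -⟩ := hbound x hx
      exact (h₁₂₃ c (.inr hc) y hy).trans_le hcx

end DecreasingSublist

section Plactic

variable {n : ℕ}

/-- The only strictly decreasing subsequence of one side of a Knuth relation that is not one of
the other side is `zx`; it is traded for `zy` in `xzy ≡ zxy` and for `yx` in `yxz ≡ yzx`. -/
theorem KnuthStep.hasDecreasingSublist_eq {u v : Word n} (h : KnuthStep n u v) :
    HasDecreasingSublist u = HasDecreasingSublist v := by
  funext k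
  rcases h with ⟨u, v, x, y, z, h1, h2⟩ | ⟨u, v, x, y, z, h1, h2⟩ <;>
    refine propext ⟨.of_replaces_infix ?_, .of_replaces_infix ?_⟩ <;>
    intro t ht hdec <;>
    rw [← List.mem_sublists] at ht <;>
    simp [List.sublists] at ht <;>
    rcases ht with rfl | rfl | rfl | rfl | rfl | rfl | rfl | rfl
  all_goals first
    | (simp at hdec; order)
    | (refine ⟨_, ?_, hdec, rfl, fun a ha => ⟨a, ha, a, ha, le_rfl, le_rfl⟩⟩; simp)
    | (refine ⟨[z, y], ?_, ?_, rfl, ?_⟩ <;> simp [h1, h2, h2.le])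
    | (refine ⟨[y, x], ?_, ?_, rfl, ?_⟩ <;> simp [h1, h2, h1.le])

theorem PlacticEq.apply_eq {β : Sort*} (f : Word n → β)
    (hf : ∀ u v, KnuthStep n u v → f u = f v) {u v : Word n} (h : PlacticEq n u v) : f u = f v :=
  (InvImage.equivalence Eq f eq_equivalence).eqvGen_iff.1 (h.mono hf)

theorem PlacticEq.length_eq {u v : Word n} (h : PlacticEq n u v) : u.length = v.length :=
  h.apply_eq List.length fun _ _ hk => by cases hk <;> simp

theorem PlacticEq.hasDecreasingSublist_eq {u v : Word n} (h : PlacticEq n u v) :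
    HasDecreasingSublist u = HasDecreasingSublist v :=
  h.apply_eq HasDecreasingSublist fun _ _ => KnuthStep.hasDecreasingSublist_eq

theorem HasDecreasingSublist.le_length_of_colGE {γ δ : Word n} {k : ℕ} (hge : ColGE γ δ)
    (h : HasDecreasingSublist (γ ++ δ) k) : k ≤ γ.length := by
  obtain ⟨s, hs, hdec, rfl⟩ := h
  obtain ⟨s₁, s₂, rfl, h₁, h₂⟩ := List.sublist_append_iff.1 hs
  have hcross := (List.pairwise_append.1 hdec).2.2
  -- Count the letters below all of `s₁`: `δ` has at least `|s₂|` of them, `γ` at least as many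
  -- as `δ`, and they avoid `s₁`.
  set P : Fin n → Bool := fun g => s₁.all (g < ·) with hP
  have hs₂ : s₂.length ≤ δ.countP P := by
    rw [← (List.countP_eq_length (p := P)).2 fun b hb => by
      simpa [P] using fun a ha => hcross a ha b hb]
    exact h₂.countP_le
  have hδγ : δ.countP P ≤ γ.countP P := by
    rw [← List.countP_reverse, ← List.countP_reverse (l := γ)]
    refine List.countP_le_countP_of_forall_getElem? P (by simpa using hge.1)
      fun i a b ha hb hPb => ?_
    simp only [hP, List.all_eq_true, decide_eq_true_eq] at hPb ⊢
    exact fun x hx => (hge.2 i a b ha hb).trans_lt (hPb x hx)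
  have hs₁ : s₁.length ≤ γ.countP (fun g => decide ¬P g = true) := by
    rw [← (List.countP_eq_length (p := fun g => decide ¬P g = true)).2 fun a ha => by
      simpa [P] using ⟨a, ha, le_rfl⟩]
    exact h₁.countP_le
  have := List.length_eq_countP_add_countP P (l := γ)
  simp only [List.length_append]
  omega

theorem hasDecreasingSublist_of_not_colGE {α β : Word n} (hα : IsColumn α) (hβ : IsColumn β)
    (h : ¬ ColGE α β) : HasDecreasingSublist (α ++ β) (α.length + 1) := by
  rw [ColGE, not_and_or, not_le] at h
  push Not at h
  rcases h with hlen | ⟨i, a, b, ha, hb, hba⟩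
  · refine ⟨β.take (α.length + 1), (β.take_sublist _).trans (List.sublist_append_right _ _), ?_,
      by simp; omega⟩
    exact (List.isChain_iff_pairwise.1 hβ.2).sublist (β.take_sublist _)
  obtain ⟨A₁, A₂, hA, rfl⟩ := List.exists_eq_append_cons_of_getElem?_eq_some ha
  obtain ⟨B₁, B₂, hB, hB₁⟩ := List.exists_eq_append_cons_of_getElem?_eq_some hb
  rw [List.reverse_eq_iff] at hA hB
  subst hA hB
  clear ha hb
  simp only [List.reverse_append, List.reverse_cons, List.append_assoc, List.singleton_append,
    List.length_append, List.length_reverse, List.length_cons] at hα hβ ⊢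
  refine ⟨A₂.reverse ++ a :: b :: B₁.reverse, ?_, ?_, by simp [hB₁]; omega⟩
  · exact ((List.sublist_append_right _ _).trans (List.sublist_append_right _ _)).cons_cons a
      |>.append_left _
  · refine List.isChain_iff_pairwise.1 (List.isChain_append_cons_cons.2 ⟨?_, hba, ?_⟩)
    · exact (List.isChain_split.1 hα.2).1
    · exact hβ.2.right_of_append

theorem TwoColP.length_lt_of_not_colGE {α β γ δ : Word n} (hP : TwoColP n (α ++ β) γ δ)
    (hα : IsColumn α) (hβ : IsColumn β) (h : ¬ ColGE α β) : α.length < γ.length := by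
  obtain ⟨-, -, hge, heq⟩ := hP
  have hdec := hasDecreasingSublist_of_not_colGE hα hβ h
  rw [heq.hasDecreasingSublist_eq] at hdec
  exact hdec.le_length_of_colGE hge

def columnWeight : CWord n → ℕ
  | [] => 0
  | c :: u => c.1.length + 2 * columnWeight u

theorem columnWeight_append_lt_append (p : CWord n) {u v : CWord n}
    (h : columnWeight u < columnWeight v) : columnWeight (p ++ u) < columnWeight (p ++ v) := by
  induction p with
  | nil => exact h
  | cons c p ih => simp only [List.cons_append, columnWeight]; omega

theorem TRule.columnWeight_lt {l r : CWord n} (h : TRule n l r) (q : CWord n) :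
    columnWeight (r ++ q) < columnWeight (l ++ q) := by
  cases h with
  | one α β γ _ hP =>
    have hlen : α.1.length + β.1.length = γ.1.length := by simpa using hP.2.length_eq
    have hβ : 0 < β.1.length := List.length_pos_iff.2 β.2.1
    simp only [List.cons_append, List.nil_append, columnWeight]
    omega
  | two α β γ δ h hP =>
    have hlen : α.1.length + β.1.length = γ.1.length + δ.1.length := by
      simpa using hP.2.2.2.length_eq
    have hαγ := hP.length_lt_of_not_colGE α.2 β.2 h
    simp only [List.cons_append, List.nil_append, columnWeight]
    omega

theorem TStep.columnWeight_lt {u v : CWord n} (h : TStep n u v) :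
    columnWeight v < columnWeight u := by
  obtain ⟨p, q, l, r, hr, rfl, rfl⟩ := h
  simpa only [List.append_assoc] using columnWeight_append_lt_append p (hr.columnWeight_lt q)

end Plactic

/-- The rewriting system `(C, T)` is noetherian: there is no
infinite sequence `w₁ → w₂ → w₃ → ⋯` of words in `C*` in which each `w_{i+1}`
is obtained from `w_i` by a single application of a rule of `T`. -/
theorem statement3 {n : ℕ} (f : ℕ → CWord n) :
    ¬ (∀ i : ℕ, TStep n (f i) (f (i + 1))) := by
  intro h
  obtain ⟨i, hi⟩ := WellFounded.not_rel_apply_succ (r := (· < ·)) fun i => columnWeight (f i)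
  exact hi (h i).columnWeight_lt
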